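/- Let H be a norm on ℝⁿ with H ∈ C¹(ℝⁿ∖{0}) and strictly convex unit ball, and H₀ its dual norm, also C¹ away from 0 with strictly convex unit ball. Then the maps H∇H : ℝⁿ → ℝⁿ and H₀∇H₀ : ℝⁿ → ℝⁿ (each extended by 0 at 0) are mutually inverse bijections. -/

import Mathlib

/-!
For `ξ ≠ 0`, positive homogeneity and subadditivity make `∇H(ξ)` a subgradient of `H` with
`⟪∇H(ξ), ξ⟫ = H(ξ)` (Euler) and `⟪∇H(ξ), η⟫ ≤ H(η)`; hence `H₀(∇H(ξ)) = 1` and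
`x = H(ξ) ∇H(ξ)` has `H₀(x) = H(ξ)`. The linear function `y ↦ ⟪ξ, y⟫ / H(ξ)` lies below `H₀`
(by `⟪y, ξ⟫ ≤ H₀(y) H(ξ)`) and touches it at `x`, so differentiability of `H₀` at `x` forces
`∇H₀(x) = ξ / H(ξ)`, i.e. `H₀(x) ∇H₀(x) = ξ`. The same argument with the roles of `H` and `H₀`
exchanged only needs `H(∇H₀(x)) ≤ 1`, which is `H(g) = ⟪∇H(g), g⟫ ≤ H₀(∇H(g)) = 1` for
`g = ∇H₀(x)`, using the subgradient inequality for `H₀`.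
-/

open Filter Set Function

/-- The dual norm `H₀(x) = sup_{ξ ≠ 0} ⟨x, ξ⟩ / H(ξ)`. -/
noncomputable def dualNorm {n : ℕ} (H : EuclideanSpace ℝ (Fin n) → ℝ)
    (x : EuclideanSpace ℝ (Fin n)) : ℝ :=
  ⨆ ξ : {ξ : EuclideanSpace ℝ (Fin n) // ξ ≠ 0}, (inner ℝ x ξ.1 : ℝ) / H ξ.1

theorem map_zero_of_smul {F : Type*} [AddCommGroup F] [Module ℝ F] {f : F → ℝ}
    (hsmul : ∀ t : ℝ, 0 < t → ∀ x, f (t • x) = t * f x) : f 0 = 0 := by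
  have h := hsmul 2 two_pos 0
  rw [smul_zero] at h
  linarith

section Gradient

variable {F : Type*} [NormedAddCommGroup F] [InnerProductSpace ℝ F] [CompleteSpace F]
  {f : F → ℝ} {x : F}

theorem hasDerivAt_add_smul_of_differentiableAt (hf : DifferentiableAt ℝ f x) (y : F) :
    HasDerivAt (fun t : ℝ => f (x + t • y)) (inner ℝ (gradient f x) y) 0 := by
  have hline : HasDerivAt (fun t : ℝ => x + t • y) y 0 := by
    simpa using ((hasDerivAt_id (0 : ℝ)).smul_const y).const_add x
  have hfx : HasFDerivAt f (fderiv ℝ f x) (x + (0 : ℝ) • y) := by simpa using hf.hasFDerivAt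
  rw [gradient, InnerProductSpace.toDual_symm_apply]
  exact hfx.comp_hasDerivAt 0 hline

theorem inner_gradient_self_of_smul (hf : DifferentiableAt ℝ f x)
    (hsmul : ∀ t : ℝ, 0 < t → f (t • x) = t * f x) :
    inner ℝ (gradient f x) x = f x := by
  have hline : HasDerivAt (fun t : ℝ => (1 + t) * f x) (f x) 0 := by
    simpa using ((hasDerivAt_id (0 : ℝ)).const_add 1).mul_const (f x)
  have hray : (fun t : ℝ => (1 + t) * f x) =ᶠ[nhds 0] fun t => f (x + t • x) := by
    filter_upwards [eventually_gt_nhds neg_one_lt_zero] with t ht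
    rw [← hsmul _ (by linarith), add_smul, one_smul]
  exact (hline.congr_of_eventuallyEq hray.symm).unique
    (hasDerivAt_add_smul_of_differentiableAt hf x) |>.symm

theorem inner_gradient_le_of_subadditive (hf : DifferentiableAt ℝ f x)
    (hsmul : ∀ t : ℝ, 0 < t → ∀ y, f (t • y) = t * f y)
    (hadd : ∀ y z, f (y + z) ≤ f y + f z) (y : F) :
    inner ℝ (gradient f x) y ≤ f y := by
  refine le_of_tendsto (hasDerivAt_add_smul_of_differentiableAt hf y).tendsto_slope_zero_right ?_
  filter_upwards [self_mem_nhdsWithin] with t (ht : 0 < t)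
  have hstep := hadd x (t • y)
  rw [hsmul t ht] at hstep
  rw [zero_smul, add_zero, zero_add, smul_eq_mul, inv_mul_le_iff₀ ht]
  linarith

theorem gradient_eq_of_inner_le_of_inner_eq {v : F} (hf : DifferentiableAt ℝ f x)
    (hle : ∀ y, inner ℝ v y ≤ f y) (heq : inner ℝ v x = f x) : gradient f x = v := by
  have hmin : IsLocalMin (fun y => f y - innerSL ℝ v y) x :=
    Eventually.of_forall fun y => by simp only [innerSL_apply_apply]; linarith [hle y]
  have hderiv := hmin.hasFDerivAt_eq_zero (hf.hasFDerivAt.sub (innerSL ℝ v).hasFDerivAt)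
  refine ext_inner_right ℝ fun w => ?_
  rw [gradient, InnerProductSpace.toDual_symm_apply, ← innerSL_apply_apply ℝ v w,
    ← sub_eq_zero, ← sub_apply, hderiv, zero_apply]

end Gradient

structure IsDifferentiableGauge {F : Type*} [NormedAddCommGroup F] [NormedSpace ℝ F]
    (N : F → ℝ) : Prop where
  pos : ∀ x, x ≠ 0 → 0 < N x
  smul : ∀ t : ℝ, 0 < t → ∀ x, N (t • x) = t * N x
  add_le : ∀ x y, N (x + y) ≤ N x + N y
  differentiableAt : ∀ x, x ≠ 0 → DifferentiableAt ℝ N x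

theorem IsDifferentiableGauge.map_zero {F : Type*} [NormedAddCommGroup F] [NormedSpace ℝ F]
    {N : F → ℝ} (hN : IsDifferentiableGauge N) : N 0 = 0 :=
  map_zero_of_smul hN.smul

namespace IsDifferentiableGauge

variable {F : Type*} [NormedAddCommGroup F] [InnerProductSpace ℝ F] [CompleteSpace F]
  {N M : F → ℝ}

theorem inner_gradient_self (hN : IsDifferentiableGauge N) {x : F} (hx : x ≠ 0) :
    inner ℝ (gradient N x) x = N x :=
  inner_gradient_self_of_smul (hN.differentiableAt x hx) fun t ht => hN.smul t ht x

theorem inner_gradient_le (hN : IsDifferentiableGauge N) {x : F} (hx : x ≠ 0) (y : F) :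
    inner ℝ (gradient N x) y ≤ N y :=
  inner_gradient_le_of_subadditive (hN.differentiableAt x hx) hN.smul hN.add_le y

theorem apply_gradient_eq_one (hN : IsDifferentiableGauge N)
    (hCS : ∀ x ξ, inner ℝ x ξ ≤ M x * N ξ) {ξ : F} (hξ : ξ ≠ 0) (hle : M (gradient N ξ) ≤ 1) :
    M (gradient N ξ) = 1 := by
  refine le_antisymm hle ((le_mul_iff_one_le_left (hN.pos ξ hξ)).1 ?_)
  calc N ξ = inner ℝ (gradient N ξ) ξ := (hN.inner_gradient_self hξ).symm
    _ ≤ M (gradient N ξ) * N ξ := hCS _ ξ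

theorem apply_gradient_le_one_of_dual (hN : IsDifferentiableGauge N)
    (hM : IsDifferentiableGauge M) (hle : ∀ ξ, ξ ≠ 0 → M (gradient N ξ) ≤ 1) {x : F} (hx : x ≠ 0) :
    N (gradient M x) ≤ 1 := by
  have hgrad : gradient M x ≠ 0 := by
    intro h
    have := hM.inner_gradient_self hx
    rw [h, inner_zero_left] at this
    exact (hM.pos x hx).ne this
  calc N (gradient M x) = inner ℝ (gradient M x) (gradient N (gradient M x)) := by
        rw [real_inner_comm, hN.inner_gradient_self hgrad]
    _ ≤ M (gradient N (gradient M x)) := hM.inner_gradient_le hx _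
    _ ≤ 1 := hle _ hgrad

theorem leftInverse_smul_gradient (hN : IsDifferentiableGauge N) (hM : IsDifferentiableGauge M)
    (hCS : ∀ x ξ, inner ℝ x ξ ≤ M x * N ξ) (hle : ∀ ξ, ξ ≠ 0 → M (gradient N ξ) ≤ 1) :
    LeftInverse (fun x => M x • gradient M x) (fun ξ => N ξ • gradient N ξ) := by
  intro ξ
  rcases eq_or_ne ξ 0 with rfl | hξ
  · simp only [hN.map_zero, hM.map_zero, zero_smul]
  have hNξ := hN.pos ξ hξ
  have hMx : M (N ξ • gradient N ξ) = N ξ := by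
    rw [hM.smul _ hNξ, hN.apply_gradient_eq_one hCS hξ (hle ξ hξ), mul_one]
  have hx : N ξ • gradient N ξ ≠ 0 := by
    intro h
    rw [h, hM.map_zero] at hMx
    exact hNξ.ne hMx
  have hgrad : gradient M (N ξ • gradient N ξ) = (N ξ)⁻¹ • ξ := by
    refine gradient_eq_of_inner_le_of_inner_eq (hM.differentiableAt _ hx) (fun y => ?_) ?_
    · rw [real_inner_smul_left, real_inner_comm, inv_mul_le_iff₀ hNξ, mul_comm]
      exact hCS y ξ
    · rw [hMx, real_inner_smul_left, real_inner_smul_right, real_inner_comm,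
        hN.inner_gradient_self hξ, ← mul_assoc, inv_mul_cancel₀ hNξ.ne', one_mul]
  simp only [hMx, hgrad, smul_smul, mul_inv_cancel₀ hNξ.ne', one_smul]

theorem rightInverse_smul_gradient (hN : IsDifferentiableGauge N) (hM : IsDifferentiableGauge M)
    (hCS : ∀ x ξ, inner ℝ x ξ ≤ M x * N ξ) (hle : ∀ ξ, ξ ≠ 0 → M (gradient N ξ) ≤ 1) :
    RightInverse (fun x => M x • gradient M x) (fun ξ => N ξ • gradient N ξ) :=
  hM.leftInverse_smul_gradient hN (fun x ξ => by rw [real_inner_comm, mul_comm]; exact hCS ξ x)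
    fun _ hx => hN.apply_gradient_le_one_of_dual hM hle hx

end IsDifferentiableGauge

theorem exists_pos_mul_norm_le_of_smul {F : Type*} [NormedAddCommGroup F] [NormedSpace ℝ F]
    [ProperSpace F] {f : F → ℝ} (hf : Continuous f) (hpos : ∀ x, x ≠ 0 → 0 < f x)
    (hsmul : ∀ t : ℝ, 0 < t → ∀ x, f (t • x) = t * f x) :
    ∃ c > 0, ∀ x, c * ‖x‖ ≤ f x := by
  have hf0 : f 0 = 0 := map_zero_of_smul hsmul
  rcases subsingleton_or_nontrivial F with hF | hF
  · exact ⟨1, one_pos, fun x => by rw [Subsingleton.elim x 0, norm_zero, hf0, mul_zero]⟩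
  obtain ⟨u, hu, hmin⟩ := (isCompact_sphere (0 : F) 1).exists_isMinOn
    (NormedSpace.sphere_nonempty.2 zero_le_one) hf.continuousOn
  have hu0 : u ≠ 0 := ne_zero_of_mem_unit_sphere ⟨u, hu⟩
  refine ⟨f u, hpos u hu0, fun x => ?_⟩
  rcases eq_or_ne x 0 with rfl | hx
  · rw [norm_zero, mul_zero, hf0]
  have hxn : 0 < ‖x‖ := norm_pos_iff.2 hx
  have hx1 : ‖x‖⁻¹ • x ∈ Metric.sphere (0 : F) 1 := by
    rw [mem_sphere_zero_iff_norm, norm_smul, norm_inv, norm_norm, inv_mul_cancel₀ hxn.ne']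
  calc f u * ‖x‖ ≤ f (‖x‖⁻¹ • x) * ‖x‖ := mul_le_mul_of_nonneg_right (hmin hx1) hxn.le
    _ = f x := by
      rw [hsmul _ (inv_pos.2 hxn), mul_comm, ← mul_assoc, mul_inv_cancel₀ hxn.ne', one_mul]

theorem ConvexOn.map_add_le_add_of_smul {F : Type*} [AddCommGroup F] [Module ℝ F] {f : F → ℝ}
    (hf : ConvexOn ℝ univ f) (hsmul : ∀ t : ℝ, 0 < t → ∀ x, f (t • x) = t * f x) (x y : F) :
    f (x + y) ≤ f x + f y := by
  have hmid := hf.2 (mem_univ x) (mem_univ y) (by norm_num : (0 : ℝ) ≤ 1 / 2)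
    (by norm_num : (0 : ℝ) ≤ 1 / 2) (by norm_num)
  have hxy : x + y = (2 : ℝ) • ((1 / 2 : ℝ) • x + (1 / 2 : ℝ) • y) := by
    rw [smul_add, smul_smul, smul_smul]; norm_num
  rw [hxy, hsmul 2 two_pos]
  simp only [smul_eq_mul] at hmid
  linarith

section DualNorm

variable {n : ℕ} {H : EuclideanSpace ℝ (Fin n) → ℝ}

theorem dualNorm_smul_of_nonneg {t : ℝ} (ht : 0 ≤ t) (x : EuclideanSpace ℝ (Fin n)) :
    dualNorm H (t • x) = t * dualNorm H x := by
  simp only [dualNorm, real_inner_smul_left, mul_div_assoc, Real.mul_iSup_of_nonneg ht]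

theorem inner_le_dualNorm_mul (hH : ∀ ξ, ξ ≠ 0 → 0 < H ξ) (hH0 : H 0 = 0) {c : ℝ} (hc : 0 < c)
    (hcH : ∀ ξ, c * ‖ξ‖ ≤ H ξ) (x ξ : EuclideanSpace ℝ (Fin n)) :
    inner ℝ x ξ ≤ dualNorm H x * H ξ := by
  rcases eq_or_ne ξ 0 with rfl | hξ
  · rw [inner_zero_right, hH0, mul_zero]
  have hbdd : BddAbove (range fun ξ : {ξ : EuclideanSpace ℝ (Fin n) // ξ ≠ 0} =>
      inner ℝ x ξ.1 / H ξ.1) := by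
    refine ⟨‖x‖ / c, forall_mem_range.2 fun η => ?_⟩
    rw [div_le_div_iff₀ (hH η.1 η.2) hc]
    calc inner ℝ x η.1 * c ≤ ‖x‖ * ‖η.1‖ * c := by gcongr; exact real_inner_le_norm x η.1
      _ = ‖x‖ * (c * ‖η.1‖) := by ring
      _ ≤ ‖x‖ * H η.1 := by gcongr; exact hcH η.1
  exact (div_le_iff₀ (hH ξ hξ)).1 (le_ciSup hbdd ⟨ξ, hξ⟩)

theorem dualNorm_le_of_inner_le [Nonempty {ξ : EuclideanSpace ℝ (Fin n) // ξ ≠ 0}]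
    (hH : ∀ ξ, ξ ≠ 0 → 0 < H ξ) {x : EuclideanSpace ℝ (Fin n)} {M : ℝ}
    (h : ∀ ξ, ξ ≠ 0 → inner ℝ x ξ ≤ M * H ξ) : dualNorm H x ≤ M :=
  ciSup_le fun ξ => (div_le_iff₀ (hH ξ.1 ξ.2)).2 (h ξ.1 ξ.2)

theorem isDifferentiableGauge_dualNorm (hH : ∀ ξ, ξ ≠ 0 → 0 < H ξ) (hH0 : H 0 = 0) {c : ℝ}
    (hc : 0 < c) (hcH : ∀ ξ, c * ‖ξ‖ ≤ H ξ)
    (hdiff : ∀ x, x ≠ 0 → DifferentiableAt ℝ (dualNorm H) x) :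
    IsDifferentiableGauge (dualNorm H) where
  pos x hx := by
    have hxx := inner_le_dualNorm_mul hH hH0 hc hcH x x
    rw [real_inner_self_eq_norm_sq] at hxx
    exact (pos_iff_pos_of_mul_pos ((pow_pos (norm_pos_iff.2 hx) 2).trans_le hxx)).2 (hH x hx)
  smul t ht x := dualNorm_smul_of_nonneg ht.le x
  add_le x y := by
    rcases isEmpty_or_nonempty {ξ : EuclideanSpace ℝ (Fin n) // ξ ≠ 0} with _ | _
    · simp only [dualNorm, Real.iSup_of_isEmpty, add_zero, le_refl]
    refine dualNorm_le_of_inner_le hH fun ξ _ => ?_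
    rw [inner_add_left, add_mul]
    exact add_le_add (inner_le_dualNorm_mul hH hH0 hc hcH x ξ)
      (inner_le_dualNorm_mul hH hH0 hc hcH y ξ)
  differentiableAt := hdiff

end DualNorm

theorem HgradH_inverse_bijections_general (n : ℕ) (H : EuclideanSpace ℝ (Fin n) → ℝ)
    (hconv : ConvexOn ℝ Set.univ H)
    (hpos : ∀ ξ, 0 ≤ H ξ)
    (hzero : ∀ ξ, H ξ = 0 ↔ ξ = 0)
    (hhom : ∀ (t : ℝ) ξ, H (t • ξ) = |t| * H ξ)
    (hC1 : ContDiffOn ℝ 1 H {(0 : EuclideanSpace ℝ (Fin n))}ᶜ)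
    (hC1' : ContDiffOn ℝ 1 (dualNorm H) {(0 : EuclideanSpace ℝ (Fin n))}ᶜ) :
    Function.LeftInverse
        (fun x : EuclideanSpace ℝ (Fin n) => dualNorm H x • gradient (dualNorm H) x)
        (fun ξ : EuclideanSpace ℝ (Fin n) => H ξ • gradient H ξ) ∧
      Function.RightInverse
        (fun x : EuclideanSpace ℝ (Fin n) => dualNorm H x • gradient (dualNorm H) x)
        (fun ξ : EuclideanSpace ℝ (Fin n) => H ξ • gradient H ξ) ∧
      Function.Bijective
        (fun ξ : EuclideanSpace ℝ (Fin n) => H ξ • gradient H ξ) ∧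
      Function.Bijective
        (fun x : EuclideanSpace ℝ (Fin n) => dualNorm H x • gradient (dualNorm H) x) := by
  have hH : ∀ ξ, ξ ≠ 0 → 0 < H ξ := fun ξ hξ => (hpos ξ).lt_of_ne' (mt (hzero ξ).1 hξ)
  have hsmul : ∀ t : ℝ, 0 < t → ∀ ξ, H (t • ξ) = t * H ξ := fun t ht ξ => by
    rw [hhom, abs_of_pos ht]
  have hdiff : ∀ {f : EuclideanSpace ℝ (Fin n) → ℝ}, ContDiffOn ℝ 1 f {0}ᶜ →
      ∀ x, x ≠ 0 → DifferentiableAt ℝ f x := fun hf _ hx =>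
    (hf.differentiableOn one_ne_zero).differentiableAt (isOpen_compl_singleton.mem_nhds hx)
  have hHg : IsDifferentiableGauge H :=
    ⟨hH, hsmul, hconv.map_add_le_add_of_smul hsmul, hdiff hC1⟩
  obtain ⟨c, hc, hcH⟩ := exists_pos_mul_norm_le_of_smul
    (continuousOn_univ.1 (hconv.continuousOn isOpen_univ)) hH hsmul
  have hH₀g := isDifferentiableGauge_dualNorm hH hHg.map_zero hc hcH (hdiff hC1')
  have hCS := inner_le_dualNorm_mul hH hHg.map_zero hc hcH
  have hle : ∀ ξ, ξ ≠ 0 → dualNorm H (gradient H ξ) ≤ 1 := fun ξ hξ =>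
    have : Nonempty {ξ : EuclideanSpace ℝ (Fin n) // ξ ≠ 0} := ⟨⟨ξ, hξ⟩⟩
    dualNorm_le_of_inner_le hH fun η _ => (one_mul (H η)).symm ▸ hHg.inner_gradient_le hξ η
  have left := hHg.leftInverse_smul_gradient hH₀g hCS hle
  have right := hHg.rightInverse_smul_gradient hH₀g hCS hle
  exact ⟨left, right, bijective_iff_has_inverse.2 ⟨_, left, right⟩,
    bijective_iff_has_inverse.2 ⟨_, right, left⟩⟩

theorem HgradH_inverse_bijections (n : ℕ) (H : EuclideanSpace ℝ (Fin n) → ℝ)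
    (hconv : ConvexOn ℝ Set.univ H)
    (hpos : ∀ ξ, 0 ≤ H ξ)
    (hzero : ∀ ξ, H ξ = 0 ↔ ξ = 0)
    (hhom : ∀ (t : ℝ) ξ, H (t • ξ) = |t| * H ξ)
    (hC1 : ContDiffOn ℝ 1 H {(0 : EuclideanSpace ℝ (Fin n))}ᶜ)
    (hstrict : StrictConvex ℝ {ξ : EuclideanSpace ℝ (Fin n) | H ξ < 1})
    (hC1' : ContDiffOn ℝ 1 (dualNorm H) {(0 : EuclideanSpace ℝ (Fin n))}ᶜ)
    (hstrict' : StrictConvex ℝ {x : EuclideanSpace ℝ (Fin n) | dualNorm H x < 1}) :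
    Function.LeftInverse
        (fun x : EuclideanSpace ℝ (Fin n) => dualNorm H x • gradient (dualNorm H) x)
        (fun ξ : EuclideanSpace ℝ (Fin n) => H ξ • gradient H ξ) ∧
      Function.RightInverse
        (fun x : EuclideanSpace ℝ (Fin n) => dualNorm H x • gradient (dualNorm H) x)
        (fun ξ : EuclideanSpace ℝ (Fin n) => H ξ • gradient H ξ) ∧
      Function.Bijective
        (fun ξ : EuclideanSpace ℝ (Fin n) => H ξ • gradient H ξ) ∧
      Function.Bijective
        (fun x : EuclideanSpace ℝ (Fin n) => dualNorm H x • gradient (dualNorm H) x) :=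
  HgradH_inverse_bijections_general n H hconv hpos hzero hhom hC1 hC1'
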